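/- arXiv:2008.05105 — 3 statements merged into one kernel-verified Lean document; each statement's English description precedes it below -/
import Mathlib

section
/- Let z : Fin L → ℝ and let S ∈ Fin L be a ground-truth label. Define the temperature-scaled negative log-likelihood G(α) = −log(softmax(α·z)_S) for α ≥ 0. Then G'(α) = −(z_S − ∑_l z_l · softmax(α·z)_l). Consequently: (a) if z_S ≤ (1/L)∑_l z_l then G is non-decreasing on [0,∞) and its minimum over α ≥ 0 is attained at α = 0; (b) if z_S > (1/L)∑_l z_l then there exists a unique α* > 0 with ∑_l z_l · softmax(α*·z)_l = z_S, and G attains its minimum over [0,∞) at α*. -/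
/-!
With `Z(α) = ∑ exp (α z_j)` we have `G(α) = log Z(α) - α z_S`, so `G'(α) = m(α) - z_S` where
`m(α)` is the mean of `z` under `softmax (α z)`, and `m'(α)` is the variance of `z` under the same
distribution. Hence `m` is increasing, strictly unless `z` is constant, and `G` is convex.
Since `m(0)` is the plain mean and `m(α) → max z` as `α → ∞`, in case (b) the intermediate value
theorem gives a unique zero of `G'` on `(0, ∞)`, which is a global minimizer by convexity; in case
(a), `G' ≥ G'(0) ≥ 0` on `[0, ∞)`.
-/

open Real Finset Filter

noncomputable def softmax {L : ℕ} (v : Fin L → ℝ) (l : Fin L) : ℝ :=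
  Real.exp (v l) / ∑ j, Real.exp (v j)

noncomputable def entropy {L : ℕ} (q : Fin L → ℝ) : ℝ :=
  -∑ l, q l * Real.log (q l)

open Topology

noncomputable def partitionFn {L : ℕ} (z : Fin L → ℝ) (α : ℝ) : ℝ :=
  ∑ j, exp (α * z j)

noncomputable def softmaxMean {L : ℕ} (z : Fin L → ℝ) (α : ℝ) : ℝ :=
  ∑ l, z l * softmax (fun l => α * z l) l

lemma sum_softmax {L : ℕ} [Nonempty (Fin L)] (v : Fin L → ℝ) : ∑ l, softmax v l = 1 := by
  have hpos : 0 < ∑ j, exp (v j) := sum_pos (fun _ _ => exp_pos _) univ_nonempty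
  simp only [softmax, ← sum_div]
  exact div_self hpos.ne'

lemma softmax_pos {L : ℕ} (v : Fin L → ℝ) (l : Fin L) : 0 < softmax v l :=
  div_pos (exp_pos _) (sum_pos (fun _ _ => exp_pos _) ⟨l, mem_univ l⟩)

lemma le_of_hasDerivAt_of_monotone {f f' : ℝ → ℝ} (hf : ∀ x, HasDerivAt f (f' x) x)
    (hf' : Monotone f') {c : ℝ} (hc : f' c = 0) (x : ℝ) : f c ≤ f x := by
  have hderiv : deriv f = f' := funext fun x => (hf x).deriv
  have hconv : ConvexOn ℝ Set.univ f :=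
    Monotone.convexOn_univ_of_deriv (fun x => (hf x).differentiableAt) (hderiv ▸ hf')
  refine hconv.isMinOn_of_rightDeriv_eq_zero (by simp) ?_ (Set.mem_univ x)
  rw [(hf c).hasDerivWithinAt.derivWithin (uniqueDiffWithinAt_Ioi c), hc]

lemma sum_mul_sub_sq_eq {ι : Type*} {s : Finset ι} {p : ι → ℝ} (hp : ∑ i ∈ s, p i = 1)
    (x : ι → ℝ) :
    ∑ i ∈ s, p i * (x i - ∑ j ∈ s, x j * p j) ^ 2 =
      ∑ i ∈ s, x i ^ 2 * p i - (∑ j ∈ s, x j * p j) ^ 2 := by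
  set m := ∑ j ∈ s, x j * p j
  calc ∑ i ∈ s, p i * (x i - m) ^ 2
      = ∑ i ∈ s, (x i ^ 2 * p i - 2 * m * (x i * p i) + m ^ 2 * p i) :=
        sum_congr rfl fun i _ => by ring
    _ = ∑ i ∈ s, x i ^ 2 * p i - 2 * m * m + m ^ 2 * ∑ i ∈ s, p i := by
        rw [sum_add_distrib, sum_sub_distrib, ← mul_sum, ← mul_sum]
    _ = ∑ i ∈ s, x i ^ 2 * p i - m ^ 2 := by rw [hp]; ring

section
variable {L : ℕ} (z : Fin L → ℝ)

lemma softmax_mul_eq (α : ℝ) (l : Fin L) :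
    softmax (fun l => α * z l) l = exp (α * z l) / partitionFn z α := rfl

lemma partitionFn_pos [Nonempty (Fin L)] (α : ℝ) : 0 < partitionFn z α :=
  sum_pos (fun _ _ => exp_pos _) univ_nonempty

lemma softmaxMean_eq (α : ℝ) :
    softmaxMean z α = (∑ j, z j * exp (α * z j)) / partitionFn z α := by
  simp only [softmaxMean, softmax_mul_eq, sum_div, mul_div_assoc]

lemma softmaxMean_zero : softmaxMean z 0 = (1 / (L : ℝ)) * ∑ l, z l := by
  simp [softmaxMean_eq, partitionFn, div_eq_inv_mul]

lemma hasDerivAt_partitionFn (α : ℝ) :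
    HasDerivAt (partitionFn z) (∑ j, z j * exp (α * z j)) α := by
  have h : HasDerivAt (fun a => ∑ j, exp (a * z j)) (∑ j, exp (α * z j) * z j) α :=
    HasDerivAt.fun_sum fun j _ => (hasDerivAt_mul_const (z j)).exp
  simp only [mul_comm (exp _)] at h
  exact h

lemma neg_log_softmax_eq [Nonempty (Fin L)] (S : Fin L) (α : ℝ) :
    -log (softmax (fun l => α * z l) S) = log (partitionFn z α) - α * z S := by
  rw [softmax_mul_eq, log_div (exp_ne_zero _) (partitionFn_pos z α).ne', log_exp]
  ring

lemma hasDerivAt_neg_log_softmax [Nonempty (Fin L)] (S : Fin L) (α : ℝ) :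
    HasDerivAt (fun a => -log (softmax (fun l => a * z l) S)) (softmaxMean z α - z S) α := by
  simp only [neg_log_softmax_eq]
  have := ((hasDerivAt_partitionFn z α).log (partitionFn_pos z α).ne').sub
    (hasDerivAt_mul_const (z S))
  rwa [← softmaxMean_eq] at this

lemma hasDerivAt_softmaxMean [Nonempty (Fin L)] (α : ℝ) :
    HasDerivAt (softmaxMean z)
      (∑ l, softmax (fun l => α * z l) l * (z l - softmaxMean z α) ^ 2) α := by
  have hN : HasDerivAt (fun a => ∑ j, z j * exp (a * z j)) (∑ j, z j ^ 2 * exp (α * z j)) α := by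
    have h : HasDerivAt (fun a => ∑ j, z j * exp (a * z j))
        (∑ j, z j * (exp (α * z j) * z j)) α :=
      HasDerivAt.fun_sum fun j _ => ((hasDerivAt_mul_const (z j)).exp).const_mul (z j)
    convert h using 2 with j
    ring
  have hvar : ∑ l, softmax (fun l => α * z l) l * (z l - softmaxMean z α) ^ 2 =
      (∑ j, z j ^ 2 * exp (α * z j)) / partitionFn z α -
        ((∑ j, z j * exp (α * z j)) / partitionFn z α) ^ 2 := by
    rw [softmaxMean, sum_mul_sub_sq_eq (sum_softmax _), ← softmaxMean, softmaxMean_eq]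
    simp only [softmax_mul_eq, sum_div, mul_div_assoc]
  rw [hvar, show softmaxMean z = fun a => (∑ j, z j * exp (a * z j)) / partitionFn z a from
    funext (softmaxMean_eq z)]
  refine (hN.div (hasDerivAt_partitionFn z α) (partitionFn_pos z α).ne').congr_deriv ?_
  generalize ∑ j, z j ^ 2 * exp (α * z j) = Q
  generalize ∑ j, z j * exp (α * z j) = N
  field_simp

lemma softmaxMean_monotone [Nonempty (Fin L)] : Monotone (softmaxMean z) :=
  monotone_of_hasDerivAt_nonneg (hasDerivAt_softmaxMean z) fun _ =>
    sum_nonneg fun l _ => mul_nonneg (softmax_pos _ l).le (sq_nonneg _)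

lemma softmaxMean_strictMono {i j : Fin L} (hij : z i ≠ z j) : StrictMono (softmaxMean z) := by
  have : Nonempty (Fin L) := ⟨i⟩
  refine strictMono_of_hasDerivAt_pos (hasDerivAt_softmaxMean z) fun α => ?_
  have hterm : ∀ l, z l ≠ softmaxMean z α →
      0 < ∑ l, softmax (fun l => α * z l) l * (z l - softmaxMean z α) ^ 2 := fun k hk =>
    sum_pos' (fun l _ => mul_nonneg (softmax_pos _ l).le (sq_nonneg _))
      ⟨k, mem_univ k, mul_pos (softmax_pos _ k) (sq_pos_of_ne_zero (sub_ne_zero.mpr hk))⟩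
  by_cases hi : z i = softmaxMean z α
  · exact hterm j (hi ▸ hij.symm)
  · exact hterm i hi

section Sup
variable (h : (univ : Finset (Fin L)).Nonempty)

lemma softmax_le_exp_mul_sub_sup' (α : ℝ) (j : Fin L) :
    softmax (fun l => α * z l) j ≤ exp (α * (z j - univ.sup' h z)) := by
  obtain ⟨j₀, -, hj₀⟩ := exists_mem_eq_sup' h z
  have hle : exp (α * univ.sup' h z) ≤ partitionFn z α :=
    hj₀ ▸ single_le_sum (f := fun l => exp (α * z l)) (fun _ _ => (exp_pos _).le) (mem_univ j₀)
  calc softmax (fun l => α * z l) j ≤ exp (α * z j) / exp (α * univ.sup' h z) :=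
        div_le_div_of_nonneg_left (exp_pos _).le (exp_pos _) hle
    _ = exp (α * (z j - univ.sup' h z)) := by rw [← exp_sub, mul_sub]

lemma sup'_sub_softmaxMean (α : ℝ) :
    univ.sup' h z - softmaxMean z α =
      ∑ j, (univ.sup' h z - z j) * softmax (fun l => α * z l) j := by
  have : Nonempty (Fin L) := ⟨h.choose⟩
  calc univ.sup' h z - softmaxMean z α
      = univ.sup' h z * ∑ j, softmax (fun l => α * z l) j - softmaxMean z α := by
        rw [sum_softmax, mul_one]
    _ = _ := by rw [softmaxMean, mul_sum, ← sum_sub_distrib]; simp only [sub_mul]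

lemma tendsto_sup'_sub_mul_exp_atTop (j : Fin L) :
    Tendsto (fun α => (univ.sup' h z - z j) * exp (α * (z j - univ.sup' h z))) atTop (𝓝 0) := by
  rcases (le_sup' z (mem_univ j)).eq_or_lt with hj | hj
  · simp [hj]
  · have : Tendsto (fun α => α * (z j - univ.sup' h z)) atTop atBot :=
      tendsto_id.atTop_mul_const_of_neg (sub_neg.mpr hj)
    simpa using (tendsto_exp_atBot.comp this).const_mul (univ.sup' h z - z j)

lemma tendsto_softmaxMean_atTop : Tendsto (softmaxMean z) atTop (𝓝 (univ.sup' h z)) := by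
  suffices hgap : Tendsto (fun α => univ.sup' h z - softmaxMean z α) atTop (𝓝 0) by
    simpa using (tendsto_const_nhds (x := univ.sup' h z)).sub hgap
  simp only [sup'_sub_softmaxMean z h]
  rw [← sum_const_zero (s := (univ : Finset (Fin L)))]
  refine tendsto_finsetSum _ fun j _ => ?_
  refine tendsto_of_tendsto_of_tendsto_of_le_of_le tendsto_const_nhds
    (tendsto_sup'_sub_mul_exp_atTop z h j) (fun α => ?_) (fun α => ?_)
  · exact mul_nonneg (sub_nonneg.mpr (le_sup' z (mem_univ j))) (softmax_pos _ j).le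
  · exact mul_le_mul_of_nonneg_left (softmax_le_exp_mul_sub_sup' z h α j)
      (sub_nonneg.mpr (le_sup' z (mem_univ j)))

end Sup

end

theorem nll_temperature_minimizer {L : ℕ} (hL : 0 < L) (z : Fin L → ℝ) (S : Fin L) :
    (∀ α : ℝ, HasDerivAt (fun a : ℝ => -Real.log (softmax (fun l => a * z l) S))
        (-(z S - ∑ l, z l * softmax (fun l => α * z l) l)) α) ∧
    ((z S ≤ (1 / (L : ℝ)) * ∑ l, z l) →
      MonotoneOn (fun α : ℝ => -Real.log (softmax (fun l => α * z l) S)) (Set.Ici 0) ∧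
      ∀ α : ℝ, 0 ≤ α →
        -Real.log (softmax (fun l => (0 : ℝ) * z l) S) ≤
          -Real.log (softmax (fun l => α * z l) S)) ∧
    (((1 / (L : ℝ)) * ∑ l, z l < z S ∧
        z S < Finset.univ.sup' ⟨⟨0, hL⟩, Finset.mem_univ _⟩ z) →
      ∃! αs : ℝ, 0 < αs ∧ (∑ l, z l * softmax (fun l => αs * z l) l) = z S ∧
        ∀ α : ℝ, 0 ≤ α →
          -Real.log (softmax (fun l => αs * z l) S) ≤
            -Real.log (softmax (fun l => α * z l) S)) := by
  have : Nonempty (Fin L) := ⟨S⟩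
  have hG := hasDerivAt_neg_log_softmax z S
  refine ⟨fun α => neg_sub (z S) _ ▸ hG α, fun hmean => ?_, fun ⟨hmean, hmax⟩ => ?_⟩
  · have hmon := monotoneOn_of_hasDerivWithinAt_nonneg (convex_Ici 0)
      (fun x _ => (hG x).continuousAt.continuousWithinAt) (fun x _ => (hG x).hasDerivWithinAt)
      fun x hx => sub_nonneg.mpr <| hmean.trans <|
        softmaxMean_zero z ▸ softmaxMean_monotone z (interior_subset hx)
    exact ⟨hmon, fun α hα => hmon Set.self_mem_Ici hα hα⟩
  · obtain ⟨j, -, hj⟩ := (lt_sup'_iff _).mp hmax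
    have hmono := softmaxMean_strictMono z hj.ne
    obtain ⟨A, hA, hA0⟩ := (((tendsto_softmaxMean_atTop z _).eventually (lt_mem_nhds hmax)).and
      (eventually_ge_atTop 0)).exists
    have h0 : softmaxMean z 0 < z S := softmaxMean_zero z ▸ hmean
    have hcont : Continuous (softmaxMean z) :=
      continuous_iff_continuousAt.mpr fun α => (hasDerivAt_softmaxMean z α).continuousAt
    obtain ⟨αs, hαs, hαs_eq⟩ := intermediate_value_Icc hA0 hcont.continuousOn ⟨h0.le, hA.le⟩
    refine ⟨αs, ⟨hαs.1.lt_of_ne ?_, hαs_eq, fun α _ => ?_⟩, fun β ⟨_, hβ, _⟩ => ?_⟩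
    · rintro rfl
      exact h0.ne hαs_eq
    · exact le_of_hasDerivAt_of_monotone hG (fun a b hab => sub_le_sub_right (hmono.monotone hab) _)
        (sub_eq_zero.mpr hαs_eq) α
    · exact hmono.injective (hβ.trans hαs_eq.symm)
end

section
/- Let z : Fin L → ℝ be non-constant. Then the map α ↦ ∑_l z_l · softmax(α·z)_l is strictly increasing on ℝ. In particular, for any target value c with (1/L)∑_l z_l < c < max_l z_l, there exists a unique α > 0 such that ∑_l z_l · softmax(α·z)_l = c. -/
open Real Finset Filter Topology

theorem softmax_avg_strictMono {L : ℕ} (hL : 0 < L) (z : Fin L → ℝ)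
    (hz : ¬ ∃ c, ∀ l, z l = c) :
    StrictMono (fun α : ℝ => ∑ l, z l * softmax (fun j => α * z j) l) ∧
    ∀ c : ℝ, (1 / (L : ℝ)) * ∑ l, z l < c →
      c < Finset.univ.sup' ⟨⟨0, hL⟩, Finset.mem_univ _⟩ z →
      ∃! α : ℝ, 0 < α ∧ (∑ l, z l * softmax (fun j => α * z j) l) = c := by
  have hne : (Finset.univ : Finset (Fin L)).Nonempty := ⟨⟨0, hL⟩, Finset.mem_univ _⟩
  set g : ℝ → ℝ := fun α => ∑ l, z l * softmax (fun j => α * z j) l with hgdef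
  have hD : ∀ α : ℝ, 0 < ∑ j, Real.exp (α * z j) :=
    fun α => Finset.sum_pos (fun j _ => Real.exp_pos _) hne
  have hgeq : ∀ α, g α = (∑ l, z l * Real.exp (α * z l)) / (∑ j, Real.exp (α * z j)) := by
    intro α
    simp only [hgdef, softmax, Finset.sum_div, mul_div_assoc]
  obtain ⟨i0, j0, hij0⟩ : ∃ i j : Fin L, z j < z i := by
    by_contra h
    push_neg at h
    exact hz ⟨z ⟨0, hL⟩, fun l => le_antisymm (h _ _) (h _ _)⟩
  have hmono : StrictMono g := by
    intro α β hαβ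
    rw [hgeq, hgeq, div_lt_div_iff₀ (hD α) (hD β), ← sub_pos]
    have key : ∀ i j : Fin L, z j ≤ z i →
        0 ≤ Real.exp (β * z i) * Real.exp (α * z j) -
            Real.exp (α * z i) * Real.exp (β * z j) := by
      intro i j h
      rw [← Real.exp_add, ← Real.exp_add, sub_nonneg, Real.exp_le_exp]
      nlinarith [mul_nonneg (sub_nonneg.2 hαβ.le) (sub_nonneg.2 h)]
    have term_nonneg : ∀ i j : Fin L,
        0 ≤ (z i - z j) * (Real.exp (β * z i) * Real.exp (α * z j) -
            Real.exp (α * z i) * Real.exp (β * z j)) := by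
      intro i j
      rcases le_total (z j) (z i) with h | h
      · exact mul_nonneg (sub_nonneg.2 h) (key i j h)
      · have hid : (z i - z j) * (Real.exp (β * z i) * Real.exp (α * z j) -
            Real.exp (α * z i) * Real.exp (β * z j)) =
            (z j - z i) * (Real.exp (β * z j) * Real.exp (α * z i) -
            Real.exp (α * z j) * Real.exp (β * z i)) := by ring
        rw [hid]
        exact mul_nonneg (sub_nonneg.2 h) (key j i h)
    have term_pos : 0 < (z i0 - z j0) * (Real.exp (β * z i0) * Real.exp (α * z j0) -
        Real.exp (α * z i0) * Real.exp (β * z j0)) := by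
      apply mul_pos (sub_pos.2 hij0)
      rw [← Real.exp_add, ← Real.exp_add, sub_pos, Real.exp_lt_exp]
      nlinarith [mul_pos (sub_pos.2 hαβ) (sub_pos.2 hij0)]
    have expand : (∑ l, z l * Real.exp (β * z l)) * (∑ j, Real.exp (α * z j)) -
        (∑ l, z l * Real.exp (α * z l)) * (∑ j, Real.exp (β * z j)) =
        ∑ i, ∑ j, z i * (Real.exp (β * z i) * Real.exp (α * z j) -
            Real.exp (α * z i) * Real.exp (β * z j)) := by
      rw [Finset.sum_mul, Finset.sum_mul, ← Finset.sum_sub_distrib]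
      refine Finset.sum_congr rfl fun i _ => ?_
      rw [Finset.mul_sum, Finset.mul_sum, ← Finset.sum_sub_distrib]
      refine Finset.sum_congr rfl fun j _ => ?_
      ring
    rw [expand]
    have hswap : (∑ i, ∑ j, z i * (Real.exp (β * z i) * Real.exp (α * z j) -
        Real.exp (α * z i) * Real.exp (β * z j))) =
        ∑ i, ∑ j, z j * (Real.exp (β * z j) * Real.exp (α * z i) -
        Real.exp (α * z j) * Real.exp (β * z i)) := Finset.sum_comm
    have hadd : (∑ i, ∑ j, z i * (Real.exp (β * z i) * Real.exp (α * z j) -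
        Real.exp (α * z i) * Real.exp (β * z j))) +
        (∑ i, ∑ j, z j * (Real.exp (β * z j) * Real.exp (α * z i) -
        Real.exp (α * z j) * Real.exp (β * z i))) =
        ∑ i, ∑ j, (z i - z j) * (Real.exp (β * z i) * Real.exp (α * z j) -
        Real.exp (α * z i) * Real.exp (β * z j)) := by
      rw [← Finset.sum_add_distrib]
      refine Finset.sum_congr rfl fun i _ => ?_
      rw [← Finset.sum_add_distrib]
      refine Finset.sum_congr rfl fun j _ => ?_
      ring
    have hpos : 0 < ∑ i, ∑ j, (z i - z j) *
        (Real.exp (β * z i) * Real.exp (α * z j) -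
         Real.exp (α * z i) * Real.exp (β * z j)) := by
      refine Finset.sum_pos' (fun i _ => Finset.sum_nonneg fun j _ => term_nonneg i j)
        ⟨i0, Finset.mem_univ _, Finset.sum_pos' (fun j _ => term_nonneg i0 j)
          ⟨j0, Finset.mem_univ _, term_pos⟩⟩
    linarith [hswap, hadd, hpos]
  have hcont : Continuous g := by
    have hfe : g = fun α => (∑ l, z l * Real.exp (α * z l)) / (∑ j, Real.exp (α * z j)) :=
      funext hgeq
    rw [hfe]
    refine Continuous.div ?_ ?_ fun α => (hD α).ne'
    · exact continuous_finset_sum _ fun l _ =>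
        continuous_const.mul (Real.continuous_exp.comp (continuous_id.mul continuous_const))
    · exact continuous_finset_sum _ fun j _ =>
        Real.continuous_exp.comp (continuous_id.mul continuous_const)
  refine ⟨hmono, ?_⟩
  intro c hc1 hc2
  set M := Finset.univ.sup' hne z with hMdef
  have hcM : c < M := hc2
  have hle : ∀ l, z l ≤ M := fun l => Finset.le_sup' z (Finset.mem_univ l)
  obtain ⟨lm, _, hlm⟩ := Finset.exists_mem_eq_sup' hne z
  have hg0 : g 0 = (∑ l, z l) / L := by
    rw [hgeq]
    simp [Finset.card_univ]
  have hsum_w : ∀ α : ℝ, ∑ l, Real.exp (α * z l) / (∑ j, Real.exp (α * z j)) = 1 := by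
    intro α
    rw [← Finset.sum_div, div_self (hD α).ne']
  have hbound : ∀ α : ℝ, M - g α ≤ ∑ l, (M - z l) * Real.exp (α * (z l - M)) := by
    intro α
    have h1 : M - g α = ∑ l, (M - z l) *
        (Real.exp (α * z l) / ∑ j, Real.exp (α * z j)) := by
      simp only [sub_mul]
      rw [Finset.sum_sub_distrib, ← Finset.mul_sum, hsum_w, mul_one, hgeq]
      simp only [Finset.sum_div, mul_div_assoc]
    rw [h1]
    refine Finset.sum_le_sum fun l _ => ?_
    refine mul_le_mul_of_nonneg_left ?_ (sub_nonneg.2 (hle l))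
    have h2 : Real.exp (α * (z l - M)) = Real.exp (α * z l) / Real.exp (α * M) := by
      rw [← Real.exp_sub]
      ring_nf
    rw [h2]
    apply div_le_div_of_nonneg_left (Real.exp_pos _).le (Real.exp_pos _)
    calc Real.exp (α * M) = Real.exp (α * z lm) := by rw [hMdef.trans hlm]
      _ ≤ ∑ j, Real.exp (α * z j) :=
        Finset.single_le_sum (f := fun j => Real.exp (α * z j)) (fun j _ => (Real.exp_pos _).le) (Finset.mem_univ lm)
  have htend : Tendsto (fun α : ℝ => ∑ l, (M - z l) * Real.exp (α * (z l - M)))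
      atTop (𝓝 0) := by
    have h0 : (0 : ℝ) = ∑ _l : Fin L, (0 : ℝ) := by simp
    rw [h0]
    refine tendsto_finset_sum _ fun l _ => ?_
    rcases eq_or_lt_of_le (hle l) with h | h
    · simpa [h] using tendsto_const_nhds
    · have hexp : Tendsto (fun α : ℝ => Real.exp (α * (z l - M))) atTop (𝓝 0) := by
        apply Real.tendsto_exp_atBot.comp
        exact Tendsto.atTop_mul_const_of_neg (by linarith) tendsto_id
      simpa using hexp.const_mul (M - z l)
  obtain ⟨T, hTb, hT0⟩ := ((htend.eventually_lt_const (by linarith : (0:ℝ) < M - c)).and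
    (eventually_gt_atTop 0)).exists
  have hgT : c < g T := by have := hbound T; linarith
  have hg0c : g 0 < c := by
    have h1 : (1 / (L : ℝ)) * ∑ l, z l = (∑ l, z l) / L := one_div_mul_eq_div _ _
    rw [hg0]; linarith
  obtain ⟨α, hαmem, hαeq⟩ := intermediate_value_Icc hT0.le hcont.continuousOn
    ⟨hg0c.le, hgT.le⟩
  refine ⟨α, ⟨?_, hαeq⟩, ?_⟩
  · by_contra h
    push_neg at h
    have := hmono.monotone h
    rw [hαeq] at this
    linarith
  · rintro β ⟨_, hβeq⟩
    exact hmono.injective (hβeq.trans hαeq.symm)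
end

section
/- Let z : Fin L → ℝ be non-constant, S ∈ Fin L, and suppose (1/L)∑_l z_l < z_S < max_l z_l (overconfidence regime at this location). Then the unique α* > 0 minimizing the NLL G(α) = −log softmax(α·z)_S over α ≥ 0 coincides with the unique maximizer of the entropy E(α) = −∑_l softmax(α·z)_l log softmax(α·z)_l over the feasible set {α ≥ 0 : ∑_l z_l · softmax(α·z)_l ≥ z_S}. Moreover at α* the constraint is active: ∑_l z_l · softmax(α*·z)_l = z_S. -/
open Real Finset Filter Topology

theorem add_deriv_mul_sub_le_of_monotone {f f' : ℝ → ℝ} (hf : ∀ x, HasDerivAt f (f' x) x)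
    (hf' : Monotone f') (x y : ℝ) : f x + f' x * (y - x) ≤ f y := by
  rcases lt_trichotomy x y with hxy | rfl | hyx
  · obtain ⟨c, hc, hslope⟩ := exists_hasDerivAt_eq_slope f f' hxy
      (fun t _ => (hf t).continuousAt.continuousWithinAt) (fun t _ => hf t)
    have h := hf' hc.1.le
    rw [hslope, le_div_iff₀ (sub_pos.2 hxy)] at h
    linarith
  · simp
  · obtain ⟨c, hc, hslope⟩ := exists_hasDerivAt_eq_slope f f' hyx
      (fun t _ => (hf t).continuousAt.continuousWithinAt) (fun t _ => hf t)
    have h := hf' hc.2.le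
    rw [hslope, div_le_iff₀ (sub_pos.2 hyx)] at h
    linarith

section Gibbs

variable {ι : Type*} [Fintype ι] (z : ι → ℝ)

noncomputable def partitionFunction (α : ℝ) : ℝ := ∑ j, exp (α * z j)

noncomputable def gibbsMean (α : ℝ) : ℝ := (∑ j, z j * exp (α * z j)) / partitionFunction z α

noncomputable def gibbsVariance (α : ℝ) : ℝ :=
  (∑ j, (z j - gibbsMean z α) ^ 2 * exp (α * z j)) / partitionFunction z α

theorem partitionFunction_pos [Nonempty ι] (α : ℝ) : 0 < partitionFunction z α :=
  sum_pos (fun _ _ => exp_pos _) univ_nonempty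

theorem hasDerivAt_partitionFunction (α : ℝ) :
    HasDerivAt (partitionFunction z) (∑ j, z j * exp (α * z j)) α := by
  refine HasDerivAt.fun_sum fun j _ => ?_
  simpa [mul_comm] using (hasDerivAt_mul_const (z j)).exp

theorem hasDerivAt_log_partitionFunction [Nonempty ι] (α : ℝ) :
    HasDerivAt (fun a => log (partitionFunction z a)) (gibbsMean z α) α :=
  (hasDerivAt_partitionFunction z α).log (partitionFunction_pos z α).ne'

theorem hasDerivAt_gibbsMean [Nonempty ι] (α : ℝ) :
    HasDerivAt (gibbsMean z) (gibbsVariance z α) α := by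
  have hZ := (partitionFunction_pos z α).ne'
  have hN : HasDerivAt (fun a => ∑ j, z j * exp (a * z j)) (∑ j, z j ^ 2 * exp (α * z j)) α := by
    refine HasDerivAt.fun_sum fun j _ => ?_
    simpa [sq, mul_comm, mul_left_comm, mul_assoc] using
      ((hasDerivAt_mul_const (z j) (x := α)).exp).const_mul (z j)
  refine (hN.div (hasDerivAt_partitionFunction z α) hZ).congr_deriv ?_
  have hexpand : ∑ j, (z j - gibbsMean z α) ^ 2 * exp (α * z j) = ∑ j, z j ^ 2 * exp (α * z j)
      - 2 * gibbsMean z α * ∑ j, z j * exp (α * z j)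
      + gibbsMean z α ^ 2 * partitionFunction z α := by
    simp only [partitionFunction, mul_sum, ← sum_sub_distrib, ← sum_add_distrib]
    exact sum_congr rfl fun j _ => by ring
  rw [gibbsVariance, hexpand, gibbsMean]
  generalize ∑ j, z j ^ 2 * exp (α * z j) = M, ∑ j, z j * exp (α * z j) = N at *
  field_simp
  ring

theorem gibbsVariance_nonneg (α : ℝ) : 0 ≤ gibbsVariance z α :=
  div_nonneg (sum_nonneg fun _ _ => by positivity) (sum_nonneg fun _ _ => (exp_pos _).le)

theorem gibbsVariance_pos {i j : ι} (hij : z i ≠ z j) (α : ℝ) : 0 < gibbsVariance z α := by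
  have : Nonempty ι := ⟨i⟩
  obtain ⟨l, hl⟩ : ∃ l, z l ≠ gibbsMean z α := by
    by_contra! h
    exact hij ((h i).trans (h j).symm)
  have hl' := sub_ne_zero.2 hl
  exact div_pos (sum_pos' (fun _ _ => by positivity) ⟨l, mem_univ _, by positivity⟩)
    (partitionFunction_pos z α)

theorem monotone_gibbsMean [Nonempty ι] : Monotone (gibbsMean z) :=
  monotone_of_hasDerivAt_nonneg (hasDerivAt_gibbsMean z) (gibbsVariance_nonneg z)

theorem strictMono_gibbsMean {i j : ι} (hij : z i ≠ z j) : StrictMono (gibbsMean z) :=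
  haveI : Nonempty ι := ⟨i⟩
  strictMono_of_hasDerivAt_pos (hasDerivAt_gibbsMean z) (gibbsVariance_pos z hij)

theorem continuous_gibbsMean [Nonempty ι] : Continuous (gibbsMean z) :=
  continuous_iff_continuousAt.2 fun α => (hasDerivAt_gibbsMean z α).continuousAt

theorem gibbsMean_zero : gibbsMean z 0 = (∑ j, z j) / Fintype.card ι := by
  simp [gibbsMean, partitionFunction]

theorem sub_gibbsMean [Nonempty ι] (c α : ℝ) :
    c - gibbsMean z α = (∑ j, (c - z j) * exp (α * z j)) / partitionFunction z α := by
  rw [gibbsMean, eq_div_iff (partitionFunction_pos z α).ne', sub_mul,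
    div_mul_cancel₀ _ (partitionFunction_pos z α).ne', partitionFunction, mul_sum,
    ← sum_sub_distrib]
  exact sum_congr rfl fun j _ => by ring

theorem gibbsMean_le [Nonempty ι] {c : ℝ} (hle : ∀ j, z j ≤ c) (α : ℝ) : gibbsMean z α ≤ c := by
  rw [← sub_nonneg, sub_gibbsMean]
  exact div_nonneg (sum_nonneg fun j _ => mul_nonneg (sub_nonneg.2 (hle j)) (exp_pos _).le)
    (partitionFunction_pos z α).le

theorem sub_gibbsMean_le {k : ι} (hle : ∀ j, z j ≤ z k) (α : ℝ) :
    z k - gibbsMean z α ≤ ∑ j, (z k - z j) * exp (α * (z j - z k)) := by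
  have : Nonempty ι := ⟨k⟩
  have hZ : exp (α * z k) ≤ partitionFunction z α :=
    single_le_sum (f := fun j => exp (α * z j)) (fun j _ => (exp_pos _).le) (mem_univ k)
  calc z k - gibbsMean z α = (∑ j, (z k - z j) * exp (α * z j)) / partitionFunction z α :=
        sub_gibbsMean z _ α
    _ ≤ (∑ j, (z k - z j) * exp (α * z j)) / exp (α * z k) :=
        div_le_div_of_nonneg_left
          (sum_nonneg fun j _ => mul_nonneg (sub_nonneg.2 (hle j)) (exp_pos _).le) (exp_pos _) hZ
    _ = ∑ j, (z k - z j) * exp (α * (z j - z k)) := by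
        rw [sum_div]
        exact sum_congr rfl fun j _ => by rw [mul_sub, exp_sub, mul_div_assoc]

theorem tendsto_gibbsMean_atTop [Nonempty ι] :
    Tendsto (gibbsMean z) atTop (𝓝 (univ.sup' univ_nonempty z)) := by
  obtain ⟨k, -, hk⟩ := exists_mem_eq_sup' univ_nonempty z
  have hle : ∀ j, z j ≤ z k := fun j => hk ▸ le_sup' z (mem_univ j)
  have hgap : Tendsto (fun α => ∑ j, (z k - z j) * exp (α * (z j - z k))) atTop (𝓝 0) := by
    rw [← sum_const_zero (s := (univ : Finset ι))]
    refine tendsto_finsetSum _ fun j _ => ?_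
    rcases (hle j).eq_or_lt with h | h
    · simp [h]
    · simpa using (tendsto_exp_atBot.comp
        (tendsto_id.atTop_mul_const_of_neg (sub_neg.2 h))).const_mul (z k - z j)
  rw [hk]
  refine tendsto_of_tendsto_of_tendsto_of_le_of_le (by simpa using tendsto_const_nhds.sub hgap)
    tendsto_const_nhds (fun α => ?_) (gibbsMean_le z hle)
  linarith [sub_gibbsMean_le z hle α]

theorem le_log_partitionFunction [Nonempty ι] (α₀ α : ℝ) :
    log (partitionFunction z α₀) + gibbsMean z α₀ * (α - α₀) ≤ log (partitionFunction z α) :=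
  add_deriv_mul_sub_le_of_monotone (hasDerivAt_log_partitionFunction z) (monotone_gibbsMean z) α₀ α

theorem log_partitionFunction_sub_mul_gibbsMean_le [Nonempty ι] {α₀ α : ℝ} (hα₀ : 0 ≤ α₀)
    (hmean : gibbsMean z α₀ ≤ gibbsMean z α) :
    log (partitionFunction z α) - α * gibbsMean z α
      ≤ log (partitionFunction z α₀) - α₀ * gibbsMean z α₀ := by
  nlinarith [le_log_partitionFunction z α α₀]

end Gibbs

section Softmax

variable {L : ℕ} (z : Fin L → ℝ)

theorem sum_mul_softmax_smul (α : ℝ) :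
    ∑ l, z l * softmax (fun j => α * z j) l = gibbsMean z α := by
  simp only [softmax, gibbsMean, partitionFunction, sum_div, mul_div_assoc]

theorem neg_log_softmax_smul (S : Fin L) (α : ℝ) :
    -log (softmax (fun l => α * z l) S) = log (partitionFunction z α) - α * z S := by
  have : Nonempty (Fin L) := ⟨S⟩
  rw [softmax, ← partitionFunction, log_div (exp_ne_zero _) (partitionFunction_pos z α).ne',
    log_exp]
  ring

theorem entropy_softmax_smul [Nonempty (Fin L)] (α : ℝ) :
    entropy (softmax (fun j => α * z j)) = log (partitionFunction z α) - α * gibbsMean z α := by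
  have hZ := (partitionFunction_pos z α).ne'
  have hterm : ∀ l, softmax (fun j => α * z j) l * log (softmax (fun j => α * z j) l)
      = α * (z l * softmax (fun j => α * z j) l)
        - log (partitionFunction z α) * softmax (fun j => α * z j) l := by
    intro l
    rw [softmax, ← partitionFunction, log_div (exp_ne_zero _) hZ, log_exp]
    ring
  have hsum : ∑ l, softmax (fun j => α * z j) l = 1 := by
    simp only [softmax]
    exact (sum_div _ _ _).symm.trans (div_self hZ)
  rw [entropy, sum_congr rfl fun l _ => hterm l, sum_sub_distrib, ← mul_sum, ← mul_sum,
    sum_mul_softmax_smul, hsum]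
  ring

end Softmax

theorem nll_min_iff_constrained_entropy_max_general {L : ℕ} (hL : 0 < L) (z : Fin L → ℝ)
    (S : Fin L)
    (h1 : (1 / (L : ℝ)) * ∑ l, z l < z S)
    (h2 : z S < Finset.univ.sup' ⟨⟨0, hL⟩, Finset.mem_univ _⟩ z) :
    ∃! αs : ℝ, 0 < αs ∧
      (∀ α : ℝ, 0 ≤ α →
        -Real.log (softmax (fun l => αs * z l) S) ≤
          -Real.log (softmax (fun l => α * z l) S)) ∧
      (∀ α : ℝ, 0 ≤ α → z S ≤ (∑ l, z l * softmax (fun j => α * z j) l) →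
        entropy (softmax (fun j => α * z j)) ≤ entropy (softmax (fun j => αs * z j))) ∧
      (∑ l, z l * softmax (fun j => αs * z j) l) = z S := by
  have : Nonempty (Fin L) := ⟨⟨0, hL⟩⟩
  obtain ⟨k, -, hk⟩ := exists_mem_eq_sup' univ_nonempty z
  have hmono : StrictMono (gibbsMean z) := strictMono_gibbsMean z (h2.trans_eq hk).ne
  have h0 : gibbsMean z 0 < z S := by
    rwa [gibbsMean_zero, Fintype.card_fin, ← one_div_mul_eq_div]
  obtain ⟨b, hb⟩ := ((tendsto_gibbsMean_atTop z).eventually (lt_mem_nhds h2)).exists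
  obtain ⟨αs, ⟨hαs, -⟩, hmean⟩ := intermediate_value_Ioo (hmono.lt_iff_lt.1 (h0.trans hb)).le
    (continuous_gibbsMean z).continuousOn ⟨h0, hb⟩
  simp only [sum_mul_softmax_smul, neg_log_softmax_smul, entropy_softmax_smul]
  refine ⟨αs, ⟨hαs, fun α _ => ?_, fun α _ hα => ?_, hmean⟩,
    fun β hβ => hmono.injective (hβ.2.2.2.trans hmean.symm)⟩
  · have := le_log_partitionFunction z αs α
    rw [hmean] at this
    linarith
  · exact log_partitionFunction_sub_mul_gibbsMean_le z hαs.le (hmean.trans_le hα)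

theorem nll_min_iff_constrained_entropy_max {L : ℕ} (hL : 0 < L) (z : Fin L → ℝ)
    (S : Fin L) (hz : ¬ ∃ k, ∀ l, z l = k)
    (h1 : (1 / (L : ℝ)) * ∑ l, z l < z S)
    (h2 : z S < Finset.univ.sup' ⟨⟨0, hL⟩, Finset.mem_univ _⟩ z) :
    ∃! αs : ℝ, 0 < αs ∧
      (∀ α : ℝ, 0 ≤ α →
        -Real.log (softmax (fun l => αs * z l) S) ≤
          -Real.log (softmax (fun l => α * z l) S)) ∧
      (∀ α : ℝ, 0 ≤ α → z S ≤ (∑ l, z l * softmax (fun j => α * z j) l) →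
        entropy (softmax (fun j => α * z j)) ≤ entropy (softmax (fun j => αs * z j))) ∧
      (∑ l, z l * softmax (fun j => αs * z j) l) = z S :=
  nll_min_iff_constrained_entropy_max_general hL z S h1 h2
end
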